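/- arXiv:1004.1668 — 6 statements merged into one kernel-verified Lean document; each statement's English description precedes it below -/
import Mathlib

section
/- For any countable set A ⊆ ℂ and any dense set T ⊆ ℂ, there exists an entire function f : ℂ → ℂ which is transcendental and satisfies f(A) ⊆ T. -/
/-!
Take `f` to be a Newton series `f z = ∑ cₙ ∏_{j<n} (z - xⱼ)`, choosing the node `xₙ` and the
coefficient `cₙ` one step at a time. Choosing `|cₙ|` so small that the `n`-th term is at most `2⁻ⁿ`
on the disc of radius `n` makes the series converge locally uniformly, so `f` is entire; and since
the later terms vanish at `xₙ`, the value `f xₙ` is fixed by the first `n + 1` terms. With `A`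
enumerated by `u`, the node at step `2k` is `u k`, and density of `T` gives a `c₂ₖ` with
`f (u k) ∈ T` (unless `u k` is an earlier node, whose value is then already in `T`). The node at
step `2k + 1` is a point of modulus `≥ k` outside the countable range of `u` where `|f z| ≥ |z|ᵏ`;
a small `c₂ₖ₊₁` suffices far enough out because `∏_{j ≤ 2k} (z - xⱼ)` has degree `2k + 1`. An
algebraic function, in contrast, grows at most polynomially at infinity, by Cauchy's bound on the
roots of `P(z, ·)`.
-/

open Filter Topology Asymptotics Bornology Finset Polynomial
open scoped Polynomial.Bivariate

section Transcendence

variable {K : Type*} [NormedField K]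

def IsAlgebraicFunction (f : K → K) : Prop :=
  ∃ P : MvPolynomial (Fin 2) K, P ≠ 0 ∧ ∀ z, MvPolynomial.aeval ![z, f z] P = 0

lemma Polynomial.Bivariate.aeval_equivMvPolynomial (z w : K) (Q : K[X][Y]) :
    MvPolynomial.aeval ![z, w] (equivMvPolynomial K Q) = Q.evalEval z w := by
  rw [← coe_aevalAeval_eq_evalEval]
  change ((MvPolynomial.aeval ![z, w]).comp (equivMvPolynomial K).toAlgHom) Q = _
  congr 1
  ext <;> simp [equivMvPolynomial]

lemma Polynomial.cauchyBound_le_sum (p : K[X]) :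
    (cauchyBound p : ℝ) ≤ ∑ i ∈ range p.natDegree, ‖p.coeff i‖ / ‖p.leadingCoeff‖ + 1 := by
  have hsup : (range p.natDegree).sup (‖p.coeff ·‖₊) ≤ ∑ i ∈ range p.natDegree, ‖p.coeff i‖₊ :=
    Finset.sup_le fun i hi => single_le_sum (f := (‖p.coeff ·‖₊)) (fun _ _ => zero_le) hi
  have : cauchyBound p ≤ (∑ i ∈ range p.natDegree, ‖p.coeff i‖₊) / ‖p.leadingCoeff‖₊ + 1 := by
    unfold cauchyBound
    gcongr
  rw [← sum_div]
  simpa using (NNReal.coe_le_coe.2 this)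

theorem Polynomial.exists_isBigO_pow_of_isRoot_map {Q : K[X][Y]} (hQ : Q ≠ 0) {f : K → K}
    (hf : ∀ z, (Q.map (evalRingHom z)).IsRoot (f z)) : ∃ m : ℕ, f =O[cobounded K] (· ^ m) := by
  set a := Q.leadingCoeff
  set m := (range Q.natDegree).sup fun i => (Q.coeff i).natDegree
  refine ⟨m, ?_⟩
  have h1 : (fun _ => (1 : K)) =O[cobounded K] a.eval := by
    simpa using isBigO_cobounded_of_degree_le (P := (1 : K[X])) (Q := a)
      (by rw [degree_one, zero_le_degree_iff]; exact leadingCoeff_ne_zero.2 hQ)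
  have hinv : (fun z => (a.eval z)⁻¹) =O[cobounded K] (fun _ => (1 : K)) := by
    simpa using h1.inv_rev (Eventually.of_forall fun _ h => absurd h one_ne_zero)
  have hcoeff : ∀ i ∈ range Q.natDegree,
      (fun z => ‖(Q.coeff i).eval z‖ / ‖a.eval z‖) =O[cobounded K] (· ^ m) := by
    intro i hi
    have : (Q.coeff i).eval =O[cobounded K] (X ^ m : K[X]).eval :=
      isBigO_cobounded_of_degree_le <| degree_le_natDegree.trans <| by
        simpa using le_sup (f := fun i => (Q.coeff i).natDegree) hi
    simpa [div_eq_mul_inv] using (this.mul hinv).norm_left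
  have hbound : ∀ᶠ z in cobounded K,
      ‖f z‖ ≤ ∑ i ∈ range Q.natDegree, ‖(Q.coeff i).eval z‖ / ‖a.eval z‖ + 1 := by
    filter_upwards [h1.eq_zero_imp] with z hz
    have haz : evalRingHom z a ≠ 0 := fun h => one_ne_zero (hz h)
    have hlead := leadingCoeff_map_of_leadingCoeff_ne_zero _ haz
    have hQz : Q.map (evalRingHom z) ≠ 0 := fun h => haz (by rw [← hlead, h, leadingCoeff_zero])
    have := (hf z).norm_lt_cauchyBound hQz
    refine (NNReal.coe_lt_coe.2 this).le.trans ((cauchyBound_le_sum _).trans_eq ?_)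
    simp [hlead, natDegree_map_of_leadingCoeff_ne_zero _ haz, a]
  have hone : (fun _ => (1 : ℝ)) =O[cobounded K] (· ^ m) := by
    simpa using (isBigO_pow_pow_cobounded_of_le (R := K) m.zero_le).norm_left
  refine IsBigO.trans ?_ ((IsBigO.fun_sum hcoeff).add hone)
  refine isBigO_iff.2 ⟨1, hbound.mono fun z hz => ?_⟩
  rw [one_mul]
  exact hz.trans (le_abs_self _)

theorem IsAlgebraicFunction.exists_isBigO_pow {f : K → K} (hf : IsAlgebraicFunction f) :
    ∃ m : ℕ, f =O[cobounded K] (· ^ m) := by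
  obtain ⟨P, hP, hPf⟩ := hf
  refine exists_isBigO_pow_of_isRoot_map (Q := (Bivariate.equivMvPolynomial K).symm P)
    (by simpa using hP) fun z => ?_
  rw [IsRoot, map_evalRingHom_eval, ← Bivariate.aeval_equivMvPolynomial,
    AlgEquiv.apply_symm_apply]
  exact hPf z

theorem not_isBigO_pow_of_pow_le_norm {f : K → K} {y : ℕ → K} (hy : ∀ k, k ≤ ‖y k‖)
    (hfy : ∀ k, ‖y k‖ ^ k ≤ ‖f (y k)‖) (m : ℕ) : ¬ f =O[cobounded K] (· ^ m) := by
  intro hf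
  have hlim : Tendsto y atTop (cobounded K) :=
    tendsto_norm_atTop_iff_cobounded.1 <| tendsto_atTop_mono hy tendsto_natCast_atTop_atTop
  have hsmall := (hf.trans_isLittleO (isLittleO_pow_pow_cobounded_of_lt (Nat.lt_add_one m))).def
    one_half_pos
  obtain ⟨k, hk, hyk⟩ := ((eventually_ge_atTop (m + 1)).and (hlim.eventually hsmall)).exists
  have hy1 : 1 ≤ ‖y k‖ := le_trans (by exact_mod_cast le_of_add_le_right hk) (hy k)
  have hpos : 0 < ‖y k‖ ^ (m + 1) := by positivity
  have := (pow_le_pow_right₀ hy1 hk).trans ((hfy k).trans hyk)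
  rw [norm_pow] at this
  linarith

theorem not_isAlgebraicFunction_of_pow_le_norm {f : K → K} {y : ℕ → K} (hy : ∀ k, k ≤ ‖y k‖)
    (hfy : ∀ k, ‖y k‖ ^ k ≤ ‖f (y k)‖) : ¬ IsAlgebraicFunction f := fun hf =>
  let ⟨m, hm⟩ := hf.exists_isBigO_pow
  not_isBigO_pow_of_pow_le_norm hy hfy m hm

end Transcendence

theorem exists_seq_forall_of_forall_exists {α : Type*} [Nonempty α]
    (R : ℕ → (ℕ → α) → α → Prop) (hR : ∀ n s t, (∀ j < n, s j = t j) → R n s = R n t)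
    (h : ∀ n s, ∃ a, R n s a) : ∃ s : ℕ → α, ∀ n, R n s (s n) := by
  let s : ℕ → α := Nat.strongRec fun n ih =>
    Classical.choose (h n fun j => if hj : j < n then ih j hj else Classical.arbitrary α)
  refine ⟨s, fun n => ?_⟩
  have hs : s n = Classical.choose
      (h n fun j => if hj : j < n then s j else Classical.arbitrary α) :=
    Nat.strongRec_eq _ n
  rw [hs, hR n s (fun j => if hj : j < n then s j else Classical.arbitrary α)
    fun j hj => by rw [dif_pos hj]]
  exact Classical.choose_spec _

theorem IsCompact.exists_pos_forall_norm_mul_le {X E : Type*} [TopologicalSpace X]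
    [SeminormedRing E] {K : Set X} (hK : IsCompact K) {g : X → E} (hg : ContinuousOn g K)
    {η : ℝ} (hη : 0 < η) : ∃ ε > 0, ∀ d : E, ‖d‖ ≤ ε → ∀ z ∈ K, ‖d * g z‖ ≤ η := by
  obtain ⟨C, hC⟩ := hK.exists_bound_of_continuousOn hg
  have hC' : 0 < |C| + 1 := by positivity
  refine ⟨η / (|C| + 1), div_pos hη hC', fun d hd z hz => ?_⟩
  calc ‖d * g z‖ ≤ ‖d‖ * ‖g z‖ := norm_mul_le _ _
    _ ≤ η / (|C| + 1) * (|C| + 1) := by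
        gcongr
        exact (hC z hz).trans ((le_abs_self C).trans (le_add_of_nonneg_right zero_le_one))
    _ = η := div_mul_cancel₀ _ hC'.ne'

theorem Dense.exists_norm_le_add_mul_mem {𝕜 : Type*} [NormedField 𝕜] {T : Set 𝕜} (hT : Dense T)
    (a : 𝕜) {b : 𝕜} (hb : b ≠ 0) {ε : ℝ} (hε : 0 < ε) : ∃ d : 𝕜, ‖d‖ ≤ ε ∧ a + d * b ∈ T := by
  obtain ⟨v, hvT, hv⟩ := hT.exists_dist_lt a (mul_pos hε (norm_pos_iff.2 hb))
  refine ⟨(v - a) / b, ?_, by rwa [div_mul_cancel₀ _ hb, add_sub_cancel]⟩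
  rw [norm_div, div_le_iff₀ (norm_pos_iff.2 hb), ← dist_eq_norm, dist_comm]
  exact hv.le

theorem exists_norm_eq_mul_le_norm_add_mul (a b : ℂ) {ε : ℝ} (hε : 0 ≤ ε) :
    ∃ d : ℂ, ‖d‖ = ε ∧ ε * ‖b‖ ≤ ‖a + d * b‖ := by
  have hε' : ‖(ε : ℂ)‖ = ε := by simp [abs_of_nonneg hε]
  have h : 2 * (ε * ‖b‖) ≤ ‖a + ε * b‖ + ‖a + -ε * b‖ :=
    calc 2 * (ε * ‖b‖) = ‖(a + ε * b) - (a + -ε * b)‖ := by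
          rw [show (a + ε * b) - (a + -ε * b) = 2 * (ε * b) by ring, norm_mul, norm_mul, hε']
          simp
      _ ≤ _ := norm_sub_le _ _
  by_cases h' : ε * ‖b‖ ≤ ‖a + ε * b‖
  · exact ⟨ε, hε', h'⟩
  · exact ⟨-ε, by rw [norm_neg, hε'], by linarith⟩

theorem differentiable_tsum_of_eventually_norm_le {F : ℕ → ℂ → ℂ} {u : ℕ → ℝ} (hu : Summable u)
    (hF : ∀ n, Differentiable ℂ (F n)) (hFu : ∀ R, ∀ᶠ n in atTop, ∀ z, ‖z‖ < R → ‖F n z‖ ≤ u n) :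
    Differentiable ℂ fun z => ∑' n, F n z := by
  intro z₀
  set U := Metric.ball (0 : ℂ) (‖z₀‖ + 1)
  obtain ⟨N, hN⟩ := eventually_atTop.1 (hFu (‖z₀‖ + 1))
  have hU : ∀ z ∈ U, ∀ n, ‖F (n + N) z‖ ≤ u (n + N) := fun z hz n =>
    hN _ (Nat.le_add_left N n) z (mem_ball_zero_iff.1 hz)
  have htail : DifferentiableOn ℂ (fun z => ∑' n, F (n + N) z) U :=
    Complex.differentiableOn_tsum_of_summable_norm ((summable_nat_add_iff N).2 hu)
      (fun n => (hF _).differentiableOn) Metric.isOpen_ball fun n z hz => hU z hz n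
  have hsplit : Set.EqOn (fun z => ∑ n ∈ range N, F n z + ∑' n, F (n + N) z)
      (fun z => ∑' n, F n z) U := fun z hz =>
    ((summable_nat_add_iff N).1 (((summable_nat_add_iff N).2 hu).of_norm_bounded
      (hU z hz))).sum_add_tsum_nat_add N
  refine ((Differentiable.fun_sum fun n _ => hF n).differentiableOn.add htail).congr
    hsplit.symm |>.differentiableAt (Metric.isOpen_ball.mem_nhds ?_)
  simp

section Newton

variable {R : Type*} [CommRing R]

def newtonBasis (x : ℕ → R) (n : ℕ) (z : R) : R := ∏ j ∈ range n, (z - x j)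

def newtonSum (x c : ℕ → R) (n : ℕ) (z : R) : R := ∑ j ∈ range n, c j * newtonBasis x j z

noncomputable def newtonSeries [TopologicalSpace R] (x c : ℕ → R) (z : R) : R :=
  ∑' n, c n * newtonBasis x n z

theorem newtonBasis_congr {x x' : ℕ → R} {n : ℕ} (h : ∀ j < n, x j = x' j) :
    newtonBasis x n = newtonBasis x' n :=
  funext fun z => prod_congr rfl fun j hj => by rw [h j (mem_range.1 hj)]

theorem newtonSum_congr {x x' c c' : ℕ → R} {n : ℕ} (hx : ∀ j < n, x j = x' j)
    (hc : ∀ j < n, c j = c' j) : newtonSum x c n = newtonSum x' c' n :=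
  funext fun z => sum_congr rfl fun j hj => by
    rw [hc j (mem_range.1 hj), newtonBasis_congr fun i hi => hx i (hi.trans (mem_range.1 hj))]

theorem newtonBasis_eq_zero_iff [IsDomain R] {x : ℕ → R} {n : ℕ} {z : R} :
    newtonBasis x n z = 0 ↔ ∃ j < n, z = x j := by
  simp [newtonBasis, prod_eq_zero_iff, sub_eq_zero]

theorem newtonSeries_apply_node [TopologicalSpace R] (x c : ℕ → R) (k : ℕ) :
    newtonSeries x c (x k) = newtonSum x c k (x k) + c k * newtonBasis x k (x k) := by
  rw [newtonSeries, tsum_eq_sum (s := range (k + 1)), sum_range_succ, newtonSum]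
  intro n hn
  rw [newtonBasis, prod_eq_zero (mem_range.2 (by simpa using hn)) (sub_self _), mul_zero]

end Newton

theorem pow_le_norm_newtonBasis {𝕜 : Type*} [NormedField 𝕜] {x : ℕ → 𝕜} {n : ℕ} {z : 𝕜}
    (h : ∀ j < n, 2 * ‖x j‖ ≤ ‖z‖) : (‖z‖ / 2) ^ n ≤ ‖newtonBasis x n z‖ := by
  rw [newtonBasis, norm_prod]
  calc (‖z‖ / 2) ^ n = ∏ _j ∈ range n, ‖z‖ / 2 := by rw [prod_const, card_range]
    _ ≤ _ := prod_le_prod (fun _ _ => by positivity) fun j hj => by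
      linarith [h j (mem_range.1 hj), norm_sub_norm_le z (x j)]

theorem differentiable_newtonBasis (x : ℕ → ℂ) (n : ℕ) : Differentiable ℂ (newtonBasis x n) :=
  Differentiable.fun_finsetProd fun j _ => differentiable_id.sub_const (x j)

theorem differentiable_newtonSeries {x c : ℕ → ℂ}
    (h : ∀ (n : ℕ) (z : ℂ), ‖z‖ ≤ n → ‖c n * newtonBasis x n z‖ ≤ (1 / 2) ^ n) :
    Differentiable ℂ (newtonSeries x c) :=
  differentiable_tsum_of_eventually_norm_le summable_geometric_two
    (fun n => (differentiable_newtonBasis x n).const_mul (c n)) fun R =>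
    (eventually_ge_atTop ⌈R⌉₊).mono fun n hn z hz =>
      h n z (hz.le.trans ((Nat.le_ceil R).trans (by exact_mod_cast hn)))

/-- The step `n` of the construction, which chooses the node `y` and the coefficient `d` given the
Newton basis polynomial `B = ∏_{j<n} (· - x j)` and the sum `S` of the first `n` terms. -/
structure IsNewtonStep (T : Set ℂ) (u : ℕ → ℂ) (n : ℕ) (B S : ℂ → ℂ) (y d : ℂ) : Prop where
  norm_mul_le : ∀ z, ‖z‖ ≤ n → ‖d * B z‖ ≤ (1 / 2) ^ n
  even : ∀ k, n = 2 * k → y = u k ∧ (B y ≠ 0 → S y + d * B y ∈ T)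
  odd : ∀ k, n = 2 * k + 1 → y ∉ Set.range u ∧ k ≤ ‖y‖ ∧ ‖y‖ ^ k ≤ ‖S y + d * B y‖

theorem exists_notMem_range_pow_le_norm_add_mul_newtonBasis (u x : ℕ → ℂ) (S : ℂ → ℂ) (k : ℕ)
    {ε : ℝ} (hε : 0 < ε) : ∃ y d, ‖d‖ ≤ ε ∧ y ∉ Set.range u ∧ k ≤ ‖y‖ ∧
      ‖y‖ ^ k ≤ ‖S y + d * newtonBasis x (2 * k + 1) y‖ := by
  set n := 2 * k + 1
  have hk : (0 : ℝ) ≤ k := k.cast_nonneg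
  have hεn : 0 ≤ 2 ^ n / ε := by positivity
  have hsum : 0 ≤ ∑ j ∈ range n, ‖x j‖ := sum_nonneg fun _ _ => norm_nonneg _
  obtain ⟨y, hyu, hy⟩ : ∃ y ∈ (Set.range u)ᶜ, k + 1 + 2 ^ n / ε + 2 * ∑ j ∈ range n, ‖x j‖ < ‖y‖ :=
    ((Set.countable_range u).dense_compl ℝ).exists_mem_open
      (isOpen_lt continuous_const continuous_norm) (NormedSpace.exists_lt_norm ℝ ℂ _)
  obtain ⟨d, hd, hdy⟩ := exists_norm_eq_mul_le_norm_add_mul (S y) (newtonBasis x n y) hε.le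
  have hB : (‖y‖ / 2) ^ n ≤ ‖newtonBasis x n y‖ := pow_le_norm_newtonBasis fun j hj => by
    linarith [single_le_sum (fun i _ => norm_nonneg (x i)) (mem_range.2 hj)]
  have hy1 : 1 ≤ ‖y‖ := by linarith
  have hyε : 1 ≤ ε * ‖y‖ / 2 ^ n := by
    rw [le_div_iff₀ (by positivity), one_mul, ← div_le_iff₀' hε]
    linarith
  refine ⟨y, d, hd.le, hyu, by linarith, ?_⟩
  calc ‖y‖ ^ k ≤ ‖y‖ ^ k * (ε * ‖y‖ / 2 ^ n) := le_mul_of_one_le_right (by positivity) hyε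
    _ ≤ ‖y‖ ^ k * (ε * ‖y‖ ^ (k + 1) / 2 ^ n) := by gcongr; exact le_self_pow₀ hy1 (by omega)
    _ = ε * (‖y‖ / 2) ^ n := by rw [div_pow]; ring
    _ ≤ ε * ‖newtonBasis x n y‖ := by gcongr
    _ ≤ _ := hdy

theorem exists_isNewtonStep {T : Set ℂ} (hT : Dense T) (u : ℕ → ℂ) (n : ℕ) (x : ℕ → ℂ)
    (S : ℂ → ℂ) : ∃ y d, IsNewtonStep T u n (newtonBasis x n) S y d := by
  obtain ⟨ε, hε, hεB⟩ := (isCompact_closedBall (0 : ℂ) n).exists_pos_forall_norm_mul_le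
    (differentiable_newtonBasis x n).continuous.continuousOn (η := (1 / 2) ^ n) (by positivity)
  have hsmall : ∀ d : ℂ, ‖d‖ ≤ ε → ∀ z, ‖z‖ ≤ n → ‖d * newtonBasis x n z‖ ≤ (1 / 2) ^ n :=
    fun d hd z hz => hεB d hd z (mem_closedBall_zero_iff.2 hz)
  obtain ⟨k, rfl | rfl⟩ := Nat.even_or_odd' n
  · obtain ⟨d, hd, hdT⟩ : ∃ d : ℂ, ‖d‖ ≤ ε ∧ (newtonBasis x (2 * k) (u k) ≠ 0 →
        S (u k) + d * newtonBasis x (2 * k) (u k) ∈ T) := by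
      by_cases hB : newtonBasis x (2 * k) (u k) = 0
      · exact ⟨0, by simpa using hε.le, fun h => absurd hB h⟩
      · obtain ⟨d, hd, hdT⟩ := hT.exists_norm_le_add_mul_mem (S (u k)) hB hε
        exact ⟨d, hd, fun _ => hdT⟩
    refine ⟨u k, d, ⟨hsmall d hd, fun j hj => ?_, fun j hj => by omega⟩⟩
    obtain rfl : k = j := by omega
    exact ⟨rfl, hdT⟩
  · obtain ⟨y, d, hd, hy⟩ := exists_notMem_range_pow_le_norm_add_mul_newtonBasis u x S k hε
    refine ⟨y, d, ⟨hsmall d hd, fun j hj => by omega, fun j hj => ?_⟩⟩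
    obtain rfl : k = j := by omega
    exact hy

theorem exists_seq_isNewtonStep {T : Set ℂ} (hT : Dense T) (u : ℕ → ℂ) :
    ∃ x c : ℕ → ℂ, ∀ n, IsNewtonStep T u n (newtonBasis x n) (newtonSum x c n) (x n) (c n) := by
  obtain ⟨s, hs⟩ := exists_seq_forall_of_forall_exists (fun n (s : ℕ → ℂ × ℂ) a =>
      IsNewtonStep T u n (newtonBasis (fun j => (s j).1) n)
        (newtonSum (fun j => (s j).1) (fun j => (s j).2) n) a.1 a.2)
    (fun n s t h => by
      have hx : ∀ j < n, (s j).1 = (t j).1 := fun j hj => by rw [h j hj]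
      have hc : ∀ j < n, (s j).2 = (t j).2 := fun j hj => by rw [h j hj]
      rw [newtonBasis_congr hx, newtonSum_congr hx hc])
    fun n s =>
      let ⟨y, d, h⟩ := exists_isNewtonStep hT u n (fun j => (s j).1) _
      ⟨(y, d), h⟩
  exact ⟨_, _, hs⟩

theorem newtonSeries_mem_of_even {T : Set ℂ} {u x c : ℕ → ℂ}
    (hs : ∀ n, IsNewtonStep T u n (newtonBasis x n) (newtonSum x c n) (x n) (c n)) {n : ℕ}
    (hn : Even n) : newtonSeries x c (x n) ∈ T := by
  induction n using Nat.strong_induction_on with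
  | _ n ih =>
    obtain ⟨k, rfl⟩ := hn.two_dvd
    obtain ⟨hxk, hxT⟩ := (hs (2 * k)).even k rfl
    by_cases hB : newtonBasis x (2 * k) (x (2 * k)) = 0
    · obtain ⟨j, hj, hxj⟩ := newtonBasis_eq_zero_iff.1 hB
      have hj_even : Even j := (Nat.even_or_odd j).resolve_right fun ⟨i, hi⟩ =>
        ((hs j).odd i hi).1 ⟨k, by rw [← hxk, hxj]⟩
      rw [hxj]
      exact ih j hj hj_even
    · rw [newtonSeries_apply_node]
      exact hxT hB

/-- Stäckel's theorem: for any countable `A ⊆ ℂ` and any dense `T ⊆ ℂ`, there is a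
transcendental entire function `f` with `f(A) ⊆ T`.  Here `f` is transcendental means
that there is no nonzero two-variable polynomial `P` with complex coefficients such
that `P(z, f(z)) = 0` for all `z`. -/
theorem stackel (A T : Set ℂ) (hA : A.Countable) (hT : Dense T) :
    ∃ f : ℂ → ℂ, Differentiable ℂ f ∧
      (¬ ∃ P : MvPolynomial (Fin 2) ℂ, P ≠ 0 ∧
        ∀ z : ℂ, MvPolynomial.aeval ![z, f z] P = 0) ∧
      f '' A ⊆ T := by
  obtain ⟨u, hAu⟩ := Set.countable_iff_exists_subset_range.1 hA
  obtain ⟨x, c, hs⟩ := exists_seq_isNewtonStep hT u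
  refine ⟨newtonSeries x c, differentiable_newtonSeries fun n => (hs n).norm_mul_le, ?_, ?_⟩
  · refine not_isAlgebraicFunction_of_pow_le_norm (y := fun k => x (2 * k + 1))
      (fun k => ((hs _).odd k rfl).2.1) fun k => ?_
    rw [newtonSeries_apply_node]
    exact ((hs _).odd k rfl).2.2
  · rintro _ ⟨a, ha, rfl⟩
    obtain ⟨k, rfl⟩ := hAu ha
    rw [← ((hs (2 * k)).even k rfl).1]
    exact newtonSeries_mem_of_even hs (even_two_mul k)
end

section
/- If α₁, …, αₙ are complex numbers algebraic over ℚ which are linearly independent over ℚ, then the numbers e^{α₁}, …, e^{αₙ} are algebraically independent over ℚ. -/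
/-!
Monomials in the `e^{αᵢ}` are exponentials of pairwise distinct algebraic numbers `∑ dᵢ αᵢ`, so it
suffices that `∑ mₓ e^x ≠ 0` for distinct algebraic `x` and integers `mₓ` not all zero. View
`∑ mₓ [x]` in the group ring `ℤ[E]` of a Galois number field `E`, multiply it by all its Galois
conjugates and then by its image under `x ↦ -x`: the product still evaluates to `0`, has
Galois-invariant coefficients and a positive constant coefficient `m₀` (a sum of squares).
Hermite's approximations `nₚ e^x ≈ p gₚ(x)` (`exp_polynomial_approx`), summed against these
coefficients, turn `m₀ + ∑ mₓ e^x = 0` into an integer `N` (Galois invariance makes `∑ mₓ gₚ(x)`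
rational, a common denominator makes it integral) that is prime to `p`, hence nonzero, yet of
size `O(cᵖ / (p - 1)!)`: absurd for large `p`.
-/

open Polynomial AddMonoidAlgebra

theorem IsIntegral.pow_smul_aeval {R A : Type*} [CommRing R] [CommRing A] [Algebra R A]
    {d : R} {x : A} (hx : IsIntegral R (d • x)) {g : R[X]} {k : ℕ} (hg : g.natDegree ≤ k) :
    IsIntegral R (d ^ k • aeval x g) := by
  have hscale : aeval (d • x) (g.scaleRoots d) = d ^ g.natDegree • aeval x g := by
    simp only [aeval_def, Algebra.smul_def, map_pow]
    exact scaleRoots_eval₂_mul _ _ _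
  rw [← Nat.sub_add_cancel hg, pow_add, mul_smul, ← hscale]
  exact (IsIntegral.of_mem_of_fg _ hx.fg_adjoin_singleton _
    (aeval_mem_adjoin_singleton R _)).smul _

theorem exists_int_eq_of_mem_range_of_isIntegral {E : Type*} [Field E] [Algebra ℚ E] {y : E}
    (hrat : y ∈ Set.range (algebraMap ℚ E)) (hint : IsIntegral ℤ y) : ∃ m : ℤ, (m : E) = y := by
  obtain ⟨q, rfl⟩ := hrat
  obtain ⟨m, rfl⟩ := IsIntegrallyClosed.isIntegral_iff.mp
    ((isIntegral_algebraMap_iff (algebraMap ℚ E).injective).mp hint)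
  exact ⟨m, by simp⟩

theorem Prime.not_dvd_pow_mul_mul_add_mul {R : Type*} [CommRing R] {p d a n : R} (hp : Prime p)
    (hd : ¬p ∣ d) (ha : ¬p ∣ a) (hn : ¬p ∣ n) (k : ℕ) (m : R) : ¬p ∣ d ^ k * (a * n) + p * m := by
  rw [dvd_add_left (dvd_mul_right _ _)]
  exact hp.not_dvd_mul (fun h => hd (hp.dvd_of_dvd_pow h)) (hp.not_dvd_mul ha hn)

theorem AddMonoidAlgebra.coeff_mul_domCongr_neg_zero {R E : Type*} [CommSemiring R]
    [AddCommGroup E] (f : AddMonoidAlgebra R E) :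
    (f * domCongr R R (AddEquiv.neg E) f).coeff 0 =
      ∑ x ∈ f.coeff.support, f.coeff x * f.coeff x := by
  simp [coeff_mul_apply_left, coeff_domCongr, Finsupp.sum]

theorem algebraicIndependent_of_linearIndependent_monomials {R A σ : Type*} [CommRing R]
    [CommRing A] [Algebra R A] {x : σ → A}
    (h : LinearIndependent R fun d : σ →₀ ℕ => d.prod fun i k => x i ^ k) :
    AlgebraicIndependent R x := by
  have haeval : (MvPolynomial.aeval x).toLinearMap =
      (MvPolynomial.basisMonomials σ R).constr R fun d => d.prod fun i k => x i ^ k :=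
    (MvPolynomial.basisMonomials σ R).ext fun d => by
      rw [Module.Basis.constr_basis]
      simp [MvPolynomial.aeval_monomial]
  rw [algebraicIndependent_iff_injective_aeval]
  have := (MvPolynomial.basisMonomials σ R).injective_constr_of_linearIndependent (R₂ := R) h
  rwa [← haeval] at this

theorem exists_isGalois_intermediateField_superset (t : Finset ℂ)
    (halg : ∀ x ∈ t, IsAlgebraic ℚ x) :
    ∃ K : IntermediateField ℚ ℂ, FiniteDimensional ℚ K ∧ IsGalois ℚ K ∧ (t : Set ℂ) ⊆ K := by
  have hsplit := IntermediateField.adjoin_rootSet_isSplittingField (L := ℂ) (IsAlgClosed.splits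
    ((∏ x ∈ t, minpoly ℚ x).map (algebraMap ℚ ℂ)))
  -- `hsplit` is stated for the `IntermediateField` `ℚ`-algebra structure on the adjoin, which is
  -- not the one instance search finds, so it is passed by hand.
  have hfin := @IsSplittingField.finiteDimensional _ _ _ _ _ _ hsplit
  refine ⟨_, hfin, { to_normal := Normal.of_isSplittingField (hFEp := hsplit) },
    fun x hx => IntermediateField.subset_adjoin _ _ ?_⟩
  rw [mem_rootSet, map_prod]
  exact ⟨Finset.prod_ne_zero_iff.2 fun x hx => minpoly.ne_zero (halg x hx).isIntegral,
    Finset.prod_eq_zero hx (minpoly.aeval ℚ x)⟩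

namespace LindemannWeierstrass

theorem exists_int_polynomial_eval_zero_ne_zero_mem_aroots {E : Type*} [Field E] [Algebra ℚ E]
    [Algebra.IsIntegral ℚ E] (Φ : E →ₐ[ℚ] ℂ) {s : Finset E} (hs : 0 ∉ s) :
    ∃ P : ℤ[X], P.eval 0 ≠ 0 ∧ ∀ x ∈ s, Φ x ∈ P.aroots ℂ := by
  set Q : ℚ[X] := ∏ x ∈ s, minpoly ℚ x
  have hQ : Q.eval 0 ≠ 0 := by
    rw [eval_prod, Finset.prod_ne_zero_iff]
    intro x hx
    rw [← coeff_zero_eq_eval_zero]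
    exact minpoly.coeff_zero_ne_zero (Algebra.IsIntegral.isIntegral x)
      (ne_of_mem_of_not_mem hx hs)
  obtain ⟨b, hb, hPQ⟩ := IsLocalization.integerNormalization_spec (nonZeroDivisors ℤ) Q
  set P := IsLocalization.integerNormalization (nonZeroDivisors ℤ) Q
  have hP0 : P.eval 0 ≠ 0 := by
    intro h
    have := congrArg (eval 0) hPQ
    rw [eval_zero_map, h, map_zero, eval_smul, zsmul_eq_mul] at this
    exact mul_ne_zero (Int.cast_ne_zero.2 (nonZeroDivisors.ne_zero hb)) hQ this.symm
  refine ⟨P, hP0, fun x hx => mem_aroots.2 ⟨fun h => hP0 (by simp [h]), ?_⟩⟩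
  rw [← aeval_map_algebraMap ℚ, hPQ, map_zsmul, aeval_algHom_apply, map_prod,
    Finset.prod_eq_zero hx (minpoly.aeval ℚ x), map_zero, smul_zero]

theorem exists_prime_gt_mul_pow_div_factorial_lt_one (n : ℕ) (a c : ℝ) :
    ∃ p > n, p.Prime ∧ a * c ^ p / (p - 1).factorial < 1 := by
  obtain ⟨m, hm⟩ := Filter.eventually_atTop.1
    ((FloorSemiring.tendsto_mul_pow_div_factorial_sub_atTop a c 1).eventually (gt_mem_nhds one_pos))
  obtain ⟨p, hp, hprime⟩ := Nat.exists_infinite_primes (max (n + 1) m)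
  exact ⟨p, by omega, hprime, hm p (le_of_max_le_right hp)⟩

theorem abs_intCast_pow_mul_mul_add_mul_le {ι : Type*} {s : Finset ι} {w : ι → ℤ} {z : ι → ℂ}
    {w₀ : ℤ} (hz : ∑ i ∈ s, (w i : ℂ) * Complex.exp (z i) = -w₀) {g : ℤ[X]} {d m : ℤ} {k : ℕ}
    (hm : (m : ℂ) = d ^ k * ∑ i ∈ s, (w i : ℂ) * aeval (z i) g) {n : ℤ} {p : ℕ} {B : ℝ}
    (happrox : ∀ i ∈ s, ‖n • Complex.exp (z i) - p • aeval (z i) g‖ ≤ B) :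
    |((d ^ k * (w₀ * n) + p * m : ℤ) : ℝ)| ≤ |(d : ℝ)| ^ k * ((∑ i ∈ s, |(w i : ℝ)|) * B) := by
  have hN : ((d ^ k * (w₀ * n) + p * m : ℤ) : ℂ) =
      -(d : ℂ) ^ k * ∑ i ∈ s, (w i : ℂ) * (n • Complex.exp (z i) - p • aeval (z i) g) := by
    simp only [zsmul_eq_mul, nsmul_eq_mul, mul_sub, Finset.sum_sub_distrib,
      mul_left_comm _ (n : ℂ), mul_left_comm _ (p : ℂ), ← Finset.mul_sum]
    push_cast
    linear_combination ((d : ℂ) ^ k * n) * hz + p * hm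
  rw [← Complex.norm_intCast, hN, norm_mul, norm_neg, norm_pow, Complex.norm_intCast,
    Finset.sum_mul]
  gcongr
  exact norm_sum_le_of_le _ fun i hi =>
    (norm_mul_le _ _).trans (by rw [Complex.norm_intCast]; gcongr; exact happrox i hi)

noncomputable def expEval {E : Type*} [AddCommMonoid E] (φ : E →+ ℂ) :
    AddMonoidAlgebra ℤ E →ₐ[ℤ] ℂ :=
  lift ℤ ℂ E (Complex.expMonoidHom.comp φ.toMultiplicative)

theorem expEval_single {E : Type*} [AddCommMonoid E] (φ : E →+ ℂ) (x : E) (m : ℤ) :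
    expEval φ (single x m) = m * Complex.exp (φ x) := by
  simp [expEval, lift_single]

theorem expEval_apply {E : Type*} [AddCommMonoid E] (φ : E →+ ℂ) (f : AddMonoidAlgebra ℤ E) :
    expEval φ f = f.coeff.sum fun x m => m * Complex.exp (φ x) := by
  simp [expEval, lift_apply, zsmul_eq_mul]

section Galois

variable {E : Type*} [Field E] [Algebra ℚ E] [FiniteDimensional ℚ E]

noncomputable def galoisNorm (r : AddMonoidAlgebra ℤ E) : AddMonoidAlgebra ℤ E :=
  ∏ σ : Gal(E/ℚ), domCongr ℤ ℤ σ.toAddEquiv r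

theorem domCongr_galoisNorm (τ : Gal(E/ℚ)) (r : AddMonoidAlgebra ℤ E) :
    domCongr ℤ ℤ τ.toAddEquiv (galoisNorm r) = galoisNorm r := by
  rw [galoisNorm, map_prod]
  refine Fintype.prod_equiv (Equiv.mulLeft τ) _ _ fun σ => ?_
  rw [← AlgEquiv.trans_apply, trans_domCongr_domCongr]
  rfl

theorem galoisNorm_ne_zero {r : AddMonoidAlgebra ℤ E} (hr : r ≠ 0) : galoisNorm r ≠ 0 :=
  Finset.prod_ne_zero_iff.2 fun _ _ => (map_ne_zero_iff _ (AlgEquiv.injective _)).2 hr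

theorem expEval_galoisNorm_eq_zero (φ : E →+ ℂ) {r : AddMonoidAlgebra ℤ E}
    (h : expEval φ r = 0) : expEval φ (galoisNorm r) = 0 := by
  rw [galoisNorm, map_prod]
  refine Finset.prod_eq_zero (Finset.mem_univ 1) ?_
  rwa [show (1 : Gal(E/ℚ)).toAddEquiv = AddEquiv.refl E from rfl, domCongr_refl]

theorem exists_invariant_of_expEval_eq_zero (φ : E →+ ℂ) {r : AddMonoidAlgebra ℤ E}
    (hr : r ≠ 0) (h : expEval φ r = 0) :
    ∃ f : AddMonoidAlgebra ℤ E, f.coeff 0 ≠ 0 ∧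
      (∀ (σ : Gal(E/ℚ)) x, f.coeff (σ x) = f.coeff x) ∧ expEval φ f = 0 := by
  set ψ := galoisNorm r
  set neg := domCongr ℤ ℤ (AddEquiv.neg E)
  have hneg (τ : Gal(E/ℚ)) :
      (AddEquiv.neg E).trans τ.toAddEquiv = τ.toAddEquiv.trans (AddEquiv.neg E) :=
    AddEquiv.ext fun x => map_neg τ x
  have hfixed (τ : Gal(E/ℚ)) : domCongr ℤ ℤ τ.toAddEquiv (ψ * neg ψ) = ψ * neg ψ := by
    rw [map_mul, domCongr_galoisNorm, ← AlgEquiv.trans_apply, trans_domCongr_domCongr, hneg,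
      ← trans_domCongr_domCongr, AlgEquiv.trans_apply, domCongr_galoisNorm]
  refine ⟨ψ * neg ψ, ?_, fun σ x => ?_, ?_⟩
  · rw [coeff_mul_domCongr_neg_zero]
    refine (Finset.sum_pos (fun x hx => mul_self_pos.2 (Finsupp.mem_support_iff.1 hx)) ?_).ne'
    exact Finsupp.support_nonempty_iff.2 (coeff_eq_zero.not.2 (galoisNorm_ne_zero hr))
  · conv_lhs => rw [← hfixed σ, coeff_domCongr]
    simp
  · rw [map_mul, expEval_galoisNorm_eq_zero φ h, zero_mul]

variable [IsGalois ℚ E]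

theorem exists_int_eq_pow_smul_sum_aeval {s : Finset E} (hs : ∀ σ : Gal(E/ℚ), ∀ x ∈ s, σ x ∈ s)
    {c : E → ℤ} (hc : ∀ (σ : Gal(E/ℚ)) x, c (σ x) = c x) {d : ℤ}
    (hd : ∀ x ∈ s, IsIntegral ℤ (d • x)) {g : ℤ[X]} {k : ℕ} (hg : g.natDegree ≤ k) :
    ∃ m : ℤ, (m : E) = d ^ k • ∑ x ∈ s, c x • aeval x g := by
  refine exists_int_eq_of_mem_range_of_isIntegral
    ((IsGalois.mem_range_algebraMap_iff_fixed _).2 fun σ => ?_) ?_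
  · rw [map_zsmul, map_sum]
    congr 1
    refine Finset.sum_nbij' σ σ.symm (hs σ) (fun x hx => by simpa using hs σ⁻¹ x hx)
      (fun x _ => σ.symm_apply_apply x) (fun x _ => σ.apply_symm_apply x) fun x _ => ?_
    rw [map_zsmul, hc]
    exact congrArg _ (aeval_algHom_apply (σ : E →+* E).toIntAlgHom x g).symm
  · rw [Finset.smul_sum]
    refine IsIntegral.sum _ fun x hx => ?_
    rw [smul_comm]
    exact ((hd x hx).pow_smul_aeval hg).smul _

theorem expEval_ne_zero (Φ : E →ₐ[ℚ] ℂ) {f : AddMonoidAlgebra ℤ E} (h0 : f.coeff 0 ≠ 0)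
    (hf : ∀ (σ : Gal(E/ℚ)) x, f.coeff (σ x) = f.coeff x) : expEval (Φ : E →+ ℂ) f ≠ 0 := by
  classical
  intro hsum
  set s := f.coeff.support.erase 0
  have hs (σ : Gal(E/ℚ)) : ∀ x ∈ s, σ x ∈ s := by simp [s, hf]
  have hsum' : ∑ x ∈ s, (f.coeff x : ℂ) * Complex.exp (Φ x) = -f.coeff 0 := by
    rw [expEval_apply, Finsupp.sum, ← Finset.add_sum_erase _ _ (Finsupp.mem_support_iff.2 h0)]
      at hsum
    simpa [eq_neg_iff_add_eq_zero, add_comm] using hsum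
  obtain ⟨P, hP0, hroots⟩ := exists_int_polynomial_eval_zero_ne_zero_mem_aroots Φ
    (Finset.notMem_erase 0 _)
  have : Algebra.IsAlgebraic ℤ E :=
    IsFractionRing.comap_isAlgebraic_iff (K := ℚ) |>.mpr inferInstance
  obtain ⟨d, hd0, hd⟩ := Algebra.IsAlgebraic.exists_integral_multiples ℤ s
  obtain ⟨c, hc⟩ := exp_polynomial_approx P hP0
  set A : ℝ := ∑ x ∈ s, |(f.coeff x : ℝ)|
  obtain ⟨p, hp_gt, hp, hp_lt⟩ := exists_prime_gt_mul_pow_div_factorial_lt_one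
    (max (P.eval 0).natAbs (max (f.coeff 0).natAbs d.natAbs)) A (|(d : ℝ)| ^ P.natDegree * c)
  obtain ⟨n, hpn, g, hg, happrox⟩ := hc p (by omega) hp
  set k := p * P.natDegree
  obtain ⟨m, hm⟩ := exists_int_eq_pow_smul_sum_aeval hs (c := fun x => f.coeff x) hf hd
    (hg.trans (Nat.sub_le _ _) : g.natDegree ≤ k)
  set N := d ^ k * (f.coeff 0 * n) + p * m
  have hndvd {z : ℤ} (hz : z ≠ 0) (hzp : z.natAbs < p) : ¬(p : ℤ) ∣ z := fun h =>
    hz (Int.eq_zero_of_dvd_of_natAbs_lt_natAbs h (by simpa))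
  have hN : ¬(p : ℤ) ∣ N := (Nat.prime_iff_prime_int.mp hp).not_dvd_pow_mul_mul_add_mul
    (hndvd hd0 (by omega)) (hndvd h0 (by omega)) hpn k m
  have hmC : (m : ℂ) = (d : ℂ) ^ k * ∑ x ∈ s, (f.coeff x : ℂ) * aeval (Φ x) g := by
    have hΦ (x : E) : Φ (aeval x g) = aeval (Φ x) g :=
      (aeval_algHom_apply (Φ : E →+* ℂ).toIntAlgHom x g).symm
    simpa only [zsmul_eq_mul, map_mul, map_pow, map_intCast, map_sum, hΦ, Int.cast_pow]
      using congrArg Φ hm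
  have hN1 : |(N : ℝ)| < 1 := by
    refine (abs_intCast_pow_mul_mul_add_mul_le hsum' hmC fun x hx =>
      happrox (hroots x hx)).trans_lt (lt_of_eq_of_lt ?_ hp_lt)
    rw [mul_pow, ← pow_mul, mul_comm P.natDegree p]
    ring
  have hN0 : N = 0 := Int.abs_lt_one_iff.mp (by exact_mod_cast hN1)
  exact hN (hN0 ▸ dvd_zero _)

theorem expEval_injective (Φ : E →ₐ[ℚ] ℂ) : Function.Injective (expEval (Φ : E →+ ℂ)) := by
  refine (injective_iff_map_eq_zero _).2 fun r h => by_contra fun hr => ?_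
  obtain ⟨f, h0, hf, hev⟩ := exists_invariant_of_expEval_eq_zero _ hr h
  exact expEval_ne_zero Φ h0 hf hev

end Galois

theorem linearIndependent_exp {ι : Type*} {u : ι → ℂ} (hu : Function.Injective u)
    (halg : ∀ i, IsAlgebraic ℚ (u i)) : LinearIndependent ℚ fun i => Complex.exp (u i) := by
  classical
  rw [← LinearIndependent.iff_fractionRing ℤ ℚ, linearIndependent_iff_finset_linearIndependent]
  intro s
  obtain ⟨K, _, _, hK⟩ :=
    exists_isGalois_intermediateField_superset (s.image u) (by simpa using fun i _ => halg i)
  let y (i : s) : K := ⟨u i, hK (Finset.mem_image_of_mem u i.2)⟩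
  have hy : Function.Injective y := fun i j hij =>
    Subtype.val_injective (hu (congrArg Subtype.val hij))
  have hexp : (fun i => Complex.exp (u i)) ∘ ((↑) : s → ι) =
      (expEval (K.val : K →+ ℂ)).toLinearMap ∘ AddMonoidAlgebra.basis K ℤ ∘ y := by
    ext i
    simp [y, expEval_single]
  rw [hexp]
  -- As in `exists_isGalois_intermediateField_superset`, `K.val` is `ℚ`-linear for the wrong
  -- `ℚ`-algebra structure on `K`; `toRatAlgHom` makes it linear for `DivisionRing.toRatAlgebra`.
  exact ((AddMonoidAlgebra.basis K ℤ).linearIndependent.comp y hy).map' _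
    (LinearMap.ker_eq_bot.2 (expEval_injective (K.val : K →+* ℂ).toRatAlgHom))

end LindemannWeierstrass

/-- Lindemann–Weierstrass theorem. -/
theorem lindemann_weierstrass (n : ℕ) (α : Fin n → ℂ)
    (halg : ∀ i, IsAlgebraic ℚ (α i)) (hli : LinearIndependent ℚ α) :
    AlgebraicIndependent ℚ (fun i => Complex.exp (α i)) := by
  refine algebraicIndependent_of_linearIndependent_monomials ?_
  -- `LinearIndependent ℕ α` is by definition the injectivity of `Finsupp.linearCombination ℕ α`.
  have hexp := LindemannWeierstrass.linearIndependent_exp (hli.restrict_scalars' ℕ) fun d =>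
    (IsIntegral.sum _ fun i _ => (halg i).isIntegral.nsmul _).isAlgebraic
  have hmonomial : (fun d : Fin n →₀ ℕ => d.prod fun i k => Complex.exp (α i) ^ k) =
      fun d => Complex.exp (Finsupp.linearCombination ℕ α d) := by
    ext d
    simp only [Finsupp.prod, Finsupp.linearCombination_apply, Finsupp.sum, Complex.exp_sum,
      nsmul_eq_mul, Complex.exp_nat_mul]
  rw [hmonomial]
  exact hexp
end

section
/- Assume Schanuel's conjecture: for every n ≥ 1 and all complex numbers z₁, …, zₙ linearly independent over ℚ, among the 2n numbers z₁, …, zₙ, e^{z₁}, …, e^{zₙ} at least n are algebraically independent over ℚ (i.e. some n-element subfamily is algebraically independent over ℚ). Then for every complex number α algebraic over ℚ, the number e^{e^{α}} is transcendental over ℚ. -/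
/-!
If `e^α` is algebraic, it is a nonzero algebraic number, so Schanuel's conjecture for the single
number `e^α` already makes `e^{e^α}` transcendental. Otherwise `α` and `e^α` are linearly
independent over `ℚ`, and Schanuel's conjecture for them asks for two algebraically independent
numbers among `α, e^α, e^α, e^{e^α}`. Algebraically independent numbers are transcendental and
pairwise distinct, and if `e^{e^α}` were algebraic the only transcendental value in this list
would be `e^α`.
-/

open Complex

theorem AlgebraicIndependent.card_le_of_transcendental_mem {ι R A : Type*} [CommRing R]
    [Nontrivial R] [CommRing A] [Algebra R A] {f : ι → A} {s : Finset ι}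
    (hs : AlgebraicIndependent R (fun i : s => f i)) (t : Finset A)
    (ht : ∀ i ∈ s, Transcendental R (f i) → f i ∈ t) : s.card ≤ t.card :=
  Finset.card_le_card_of_injOn f (fun i hi => ht i hi (hs.transcendental ⟨i, hi⟩))
    fun i hi j hj hij =>
      congrArg Subtype.val (hs.injective (a₁ := ⟨i, hi⟩) (a₂ := ⟨j, hj⟩) hij)

theorem linearIndependent_pair_of_isAlgebraic_of_transcendental {K A : Type*} [Field K] [Ring A]
    [Algebra K A] {x y : A} (hx0 : x ≠ 0) (hx : IsAlgebraic K x) (hy : Transcendental K y) :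
    LinearIndependent K ![x, y] :=
  (LinearIndependent.pair_iff' hx0).2 fun a hxy => hy (hxy ▸ hx.smul a)

def SchanuelConjecture : Prop :=
  ∀ n : ℕ, 1 ≤ n → ∀ z : Fin n → ℂ, LinearIndependent ℚ z →
    ∃ s : Finset (Fin n ⊕ Fin n), s.card = n ∧
      AlgebraicIndependent ℚ (fun i : s => Sum.elim z (fun j => exp (z j)) i)

namespace SchanuelConjecture

theorem le_card_of_transcendental_mem (schanuel : SchanuelConjecture) {n : ℕ} (hn : 1 ≤ n)
    {z : Fin n → ℂ} (hz : LinearIndependent ℚ z) (t : Finset ℂ)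
    (ht : ∀ i, Transcendental ℚ (Sum.elim z (fun j => exp (z j)) i) →
      Sum.elim z (fun j => exp (z j)) i ∈ t) :
    n ≤ t.card := by
  obtain ⟨s, hcard, hs⟩ := schanuel n hn z hz
  exact hcard ▸ hs.card_le_of_transcendental_mem t fun i _ => ht i

theorem transcendental_exp (schanuel : SchanuelConjecture) {β : ℂ} (hβ0 : β ≠ 0)
    (hβ : IsAlgebraic ℚ β) : Transcendental ℚ (exp β) := by
  intro hexp
  have hz : LinearIndependent ℚ ![β] := linearIndependent_unique_iff.2 (by simpa using hβ0)
  have := schanuel.le_card_of_transcendental_mem le_rfl hz ∅ fun i hi => by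
    rcases i with j | j <;> fin_cases j
    exacts [absurd hβ hi, absurd hexp hi]
  simp at this

end SchanuelConjecture

/-- Assuming Schanuel's conjecture, `e^{e^α}` is transcendental for every algebraic `α`. -/
theorem exp_exp_transcendental_of_schanuel
    (schanuel : ∀ n : ℕ, 1 ≤ n → ∀ z : Fin n → ℂ, LinearIndependent ℚ z →
      ∃ s : Finset (Fin n ⊕ Fin n), s.card = n ∧
        AlgebraicIndependent ℚ (fun i : s => Sum.elim z (fun j => Complex.exp (z j)) i))
    (α : ℂ) (hα : IsAlgebraic ℚ α) :
    Transcendental ℚ (Complex.exp (Complex.exp α)) := by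
  have schanuel : SchanuelConjecture := schanuel
  by_cases hexp : IsAlgebraic ℚ (exp α)
  · exact schanuel.transcendental_exp (exp_ne_zero α) hexp
  intro hexpexp
  have hα0 : α ≠ 0 := by
    rintro rfl
    exact hexp (by simpa using isAlgebraic_one)
  have hz := linearIndependent_pair_of_isAlgebraic_of_transcendental hα0 hα hexp
  have := schanuel.le_card_of_transcendental_mem one_le_two hz {exp α} fun i hi => by
    rcases i with j | j <;> fin_cases j
    exacts [absurd hα hi, by simp, by simp, absurd hexpexp hi]
  simp at this
end

section
/- Given n ≥ 1 and complex numbers a₀, a₁, …, aₙ, not all zero, the polynomial P(z) = a₀·(z+1)(z²+1)⋯(zⁿ+1) + Σ_{k=1}^{n} aₖ · z^k · ∏_{1 ≤ j ≤ n, j ≠ k} (z^j + 1) is not the zero polynomial. -/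
open Polynomial Finset

/-!
Write `P n a` for the polynomial of the statement. Splitting off the factor `X ^ (n + 1) + 1`
gives `P (n + 1) a = (X ^ (n + 1) + 1) * P n a + a (n + 1) X ^ (n + 1) ∏_{j ≤ n} (X ^ j + 1)`.
At a primitive `2 (n + 1)`-th root of unity `ζ` we have `ζ ^ (n + 1) = -1` while `ζ ^ j ≠ -1`
for `1 ≤ j ≤ n`, so `P (n + 1) a = 0` forces `a (n + 1) = 0` and then `P n a = 0`.
By induction all coefficients vanish.
-/

noncomputable def interpolationPoly {R : Type*} [CommSemiring R] (n : ℕ) (a : ℕ → R) : R[X] :=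
  C (a 0) * ∏ j ∈ Icc 1 n, (X ^ j + 1) +
    ∑ k ∈ Icc 1 n, C (a k) * X ^ k * ∏ j ∈ (Icc 1 n).erase k, (X ^ j + 1)

section interpolationPoly

variable {R : Type*} [CommSemiring R]

@[simp]
theorem interpolationPoly_zero (a : ℕ → R) : interpolationPoly 0 a = C (a 0) := by
  simp [interpolationPoly]

theorem interpolationPoly_succ (n : ℕ) (a : ℕ → R) :
    interpolationPoly (n + 1) a = (X ^ (n + 1) + 1) * interpolationPoly n a +
      C (a (n + 1)) * X ^ (n + 1) * ∏ j ∈ Icc 1 n, (X ^ j + 1) := by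
  have hnot : n + 1 ∉ Icc 1 n := by simp
  have hsum : ∑ k ∈ Icc 1 n, C (a k) * X ^ k * ∏ j ∈ (insert (n + 1) (Icc 1 n)).erase k,
      (X ^ j + 1) = (X ^ (n + 1) + 1) *
        ∑ k ∈ Icc 1 n, C (a k) * X ^ k * ∏ j ∈ (Icc 1 n).erase k, (X ^ j + 1) := by
    rw [mul_sum]
    refine sum_congr rfl fun k hk => ?_
    have hkne : n + 1 ≠ k := by simp only [mem_Icc] at hk; omega
    rw [erase_insert_of_ne hkne, prod_insert (by simp)]
    ring
  rw [interpolationPoly, interpolationPoly, ← insert_Icc_right_eq_Icc_add_one (by omega),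
    prod_insert hnot, sum_insert hnot, erase_insert hnot, hsum]
  ring

end interpolationPoly

namespace IsPrimitiveRoot

variable {R : Type*} [CommRing R] [IsDomain R] {ζ : R} {m : ℕ}

theorem pow_eq_neg_one_of_two_mul (h : IsPrimitiveRoot ζ (2 * m)) (hm : m ≠ 0) :
    ζ ^ m = -1 :=
  (by simpa [hm] using h.pow_of_dvd hm (dvd_mul_left m 2) : IsPrimitiveRoot (ζ ^ m) 2)
    |>.eq_neg_one_of_two_right

theorem pow_add_one_ne_zero_of_two_mul (h : IsPrimitiveRoot ζ (2 * m)) {j : ℕ} (hj : j < m) :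
    ζ ^ j + 1 ≠ 0 := by
  intro hj0
  have hζj : ζ ^ j = ζ ^ m := by
    rw [h.pow_eq_neg_one_of_two_mul (by omega)]
    linear_combination hj0
  exact hj.ne (h.pow_inj (by omega) (by omega) hζj)

end IsPrimitiveRoot

theorem eval_interpolationPoly_succ_of_pow_eq_neg_one {R : Type*} [CommRing R] {n : ℕ}
    (a : ℕ → R) {ζ : R} (hζ : ζ ^ (n + 1) = -1) :
    (interpolationPoly (n + 1) a).eval ζ = -a (n + 1) * ∏ j ∈ Icc 1 n, (ζ ^ j + 1) := by
  simp only [interpolationPoly_succ, eval_add, eval_mul, eval_pow, eval_C, eval_X, eval_prod,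
    eval_one, hζ]
  ring

theorem coeffs_eq_zero_of_interpolationPoly_eq_zero {n : ℕ} {a : ℕ → ℂ}
    (h : interpolationPoly n a = 0) : ∀ k ≤ n, a k = 0 := by
  induction n with
  | zero => simpa using h
  | succ n ih =>
    obtain ⟨ζ, hζ⟩ : ∃ ζ : ℂ, IsPrimitiveRoot ζ (2 * (n + 1)) :=
      ⟨_, Complex.isPrimitiveRoot_exp _ (by positivity)⟩
    have hprod : ∏ j ∈ Icc 1 n, (ζ ^ j + 1) ≠ 0 :=
      prod_ne_zero_iff.mpr fun j hj => hζ.pow_add_one_ne_zero_of_two_mul (by simp at hj; omega)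
    have hlast : a (n + 1) = 0 := by
      have h0 := congrArg (eval ζ) h
      rw [eval_interpolationPoly_succ_of_pow_eq_neg_one a
        (hζ.pow_eq_neg_one_of_two_mul n.succ_ne_zero), eval_zero] at h0
      simpa [hprod] using h0
    have hinit : interpolationPoly n a = 0 := by
      rw [interpolationPoly_succ, hlast, map_zero, zero_mul, zero_mul, add_zero] at h
      exact (mul_eq_zero.mp h).resolve_left (X_pow_add_C_ne_zero n.succ_pos 1)
    intro k hk
    rcases hk.lt_or_eq with hk | rfl
    · exact ih hinit k (Nat.le_of_lt_succ hk)
    · exact hlast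

theorem interpolation_poly_ne_zero_general (n : ℕ) (a : ℕ → ℂ)
    (ha : ∃ k ≤ n, a k ≠ 0) :
    (C (a 0) * ∏ j ∈ Finset.Icc 1 n, (X ^ j + 1) +
      ∑ k ∈ Finset.Icc 1 n, C (a k) * X ^ k *
        ∏ j ∈ (Finset.Icc 1 n).erase k, (X ^ j + 1)) ≠ (0 : Polynomial ℂ) := by
  obtain ⟨k, hk, hak⟩ := ha
  exact fun h => hak (coeffs_eq_zero_of_interpolationPoly_eq_zero h k hk)

/-- Given `n ≥ 1` and complex numbers `a 0, …, a n`, not all zero, the polynomial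
`a₀ (z+1)(z²+1)⋯(zⁿ+1) + Σ_{k=1}^n aₖ zᵏ ∏_{j ≠ k} (zʲ+1)` is not the zero
polynomial. -/
theorem interpolation_poly_ne_zero (n : ℕ) (hn : 1 ≤ n) (a : ℕ → ℂ)
    (ha : ∃ k ≤ n, a k ≠ 0) :
    (C (a 0) * ∏ j ∈ Finset.Icc 1 n, (X ^ j + 1) +
      ∑ k ∈ Finset.Icc 1 n, C (a k) * X ^ k *
        ∏ j ∈ (Finset.Icc 1 n).erase k, (X ^ j + 1)) ≠ (0 : Polynomial ℂ) :=
  interpolation_poly_ne_zero_general n a ha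
end

section
/- Let (αₙ)_{n≥1} be an enumeration of the complex numbers algebraic over ℚ, and define 𝒰(w,z) = Σ_{n=1}^∞ [wⁿ / ((1 + Σ_{k=1}^{n} |σₖ(α₁,…,αₙ)|)(|w|ⁿ + 1) · n!)] · ∏_{k=1}^{n} (z − αₖ). Then the series defining 𝒰 converges for all (w,z) ∈ ℂ × ℂ, and |𝒰(w,z)| ≤ e^{max{1,|z|}} for all w, z ∈ ℂ. -/
/-! By Vieta, `∏ (z - αₖ) = ∑ⱼ (-1)ʲ σⱼ zⁿ⁻ʲ`, so its modulus is at most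
`(1 + ∑ₖ |σₖ|) max(1, |z|)ⁿ`. The normalising factor of the `n`-th term cancels this, and
`|w|ⁿ / (|w|ⁿ + 1) ≤ 1`, so the `n`-th term is dominated by `max(1, |z|)ⁿ / n!`, whose sum over
`n ≥ 1` is `e^max(1, |z|) - 1`. -/

open Finset

/-- `a` (restricted to indices `n ≥ 1`) is an enumeration of the complex numbers
that are algebraic over ℚ: a bijection from the positive integers onto the set of
algebraic numbers. -/
def IsAlgEnumeration (a : ℕ → ℂ) : Prop :=
  Set.BijOn a (Set.Ici 1) {x : ℂ | IsAlgebraic ℚ x}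

/-- The `k`-th elementary symmetric function `σ_k (a 1, …, a n)`:
the sum of all products of `k` distinct terms among `a 1, …, a n`. -/
noncomputable def esymmVal (a : ℕ → ℂ) (n k : ℕ) : ℂ :=
  ∑ s ∈ Finset.powersetCard k (Finset.Icc 1 n), ∏ i ∈ s, a i

/-- The `n`-th term (for `n ≥ 1`) of the series defining the function `𝒰`:
`wⁿ / ((1 + Σ_{k=1}^n |σ_k(α₁,…,αₙ)|) (|w|ⁿ + 1) n!) ⋅ (z - α₁) ⋯ (z - αₙ)`. -/
noncomputable def Uterm (a : ℕ → ℂ) (w z : ℂ) (n : ℕ) : ℂ :=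
  w ^ n /
      (((1 + ∑ k ∈ Finset.Icc 1 n, ‖esymmVal a n k‖ : ℝ) : ℂ) *
        (((‖w‖ ^ n + 1 : ℝ) : ℂ)) * (Nat.factorial n : ℂ)) *
    ∏ k ∈ Finset.Icc 1 n, (z - a k)

/-- The function `𝒰(w, z) = Σ_{n=1}^∞ Uterm a w z n`. -/
noncomputable def U (a : ℕ → ℂ) (w z : ℂ) : ℂ :=
  ∑' n : ℕ, Uterm a w z (n + 1)

theorem Finset.prod_sub_eq_sum_esymm {ι R : Type*} [CommRing R] (s : Finset ι) (f : ι → R)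
    (z : R) :
    ∏ i ∈ s, (z - f i) =
      ∑ j ∈ range (#s + 1), (-1) ^ j * ((s.val.map f).esymm j * z ^ (#s - j)) := by
  simpa [Polynomial.eval_prod, Polynomial.eval_finsetSum] using
    congrArg (Polynomial.eval z) (Multiset.prod_X_sub_X_eq_sum_esymm (s.val.map f))

theorem Finset.norm_prod_sub_le {ι R : Type*} [NormedCommRing R] [NormOneClass R]
    (s : Finset ι) (f : ι → R) (z : R) :
    ‖∏ i ∈ s, (z - f i)‖ ≤
      (∑ j ∈ range (#s + 1), ‖(s.val.map f).esymm j‖) * max 1 ‖z‖ ^ #s := by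
  rw [s.prod_sub_eq_sum_esymm, sum_mul]
  refine (norm_sum_le _ _).trans (sum_le_sum fun j _ => ?_)
  have hz : ‖z ^ (#s - j)‖ ≤ max 1 ‖z‖ ^ #s :=
    calc ‖z ^ (#s - j)‖ ≤ ‖z‖ ^ (#s - j) := norm_pow_le _ _
      _ ≤ max 1 ‖z‖ ^ (#s - j) := by gcongr; exact le_max_right _ _
      _ ≤ max 1 ‖z‖ ^ #s := pow_le_pow_right₀ (le_max_left _ _) (Nat.sub_le _ _)
  calc ‖(-1) ^ j * ((s.val.map f).esymm j * z ^ (#s - j))‖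
      ≤ ‖(s.val.map f).esymm j * z ^ (#s - j)‖ := by
        rcases neg_one_pow_eq_or R j with h | h <;> simp [h]
    _ ≤ ‖(s.val.map f).esymm j‖ * max 1 ‖z‖ ^ #s :=
        (norm_mul_le _ _).trans (by gcongr)

theorem esymmVal_eq_esymm (a : ℕ → ℂ) (n k : ℕ) :
    esymmVal a n k = ((Icc 1 n).val.map a).esymm k :=
  (esymm_map_val a _ k).symm

theorem sum_range_norm_esymmVal (a : ℕ → ℂ) (n : ℕ) :
    ∑ j ∈ range (n + 1), ‖esymmVal a n j‖ = 1 + ∑ k ∈ Icc 1 n, ‖esymmVal a n k‖ := by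
  rw [sum_range_succ', add_comm, range_eq_Ico, sum_Ico_add' (fun k => ‖esymmVal a n k‖),
    zero_add, Ico_add_one_right_eq_Icc]
  simp [esymmVal]

theorem norm_prod_sub_le_esymmVal (a : ℕ → ℂ) (z : ℂ) (n : ℕ) :
    ‖∏ k ∈ Icc 1 n, (z - a k)‖ ≤
      (1 + ∑ k ∈ Icc 1 n, ‖esymmVal a n k‖) * max 1 ‖z‖ ^ n := by
  have h := (Icc 1 n).norm_prod_sub_le a z
  simp_rw [← esymmVal_eq_esymm] at h
  rwa [Nat.card_Icc, add_tsub_cancel_right, sum_range_norm_esymmVal] at h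

open Nat in
theorem Real.hasSum_pow_succ_div_factorial (x : ℝ) :
    HasSum (fun n => x ^ (n + 1) / (n + 1)!) (Real.exp x - 1) := by
  have h := NormedSpace.expSeries_div_hasSum_exp x
  rw [← Real.exp_eq_exp_ℝ] at h
  simpa using (hasSum_nat_add_iff' 1).2 h

open Nat in
theorem norm_Uterm_le (a : ℕ → ℂ) (w z : ℂ) (n : ℕ) :
    ‖Uterm a w z n‖ ≤ max 1 ‖z‖ ^ n / n ! := by
  set S := ∑ k ∈ Icc 1 n, ‖esymmVal a n k‖ with hS_def
  have hS : 0 ≤ S := by positivity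
  have hw : ‖w‖ ^ n / (‖w‖ ^ n + 1) ≤ 1 := div_le_one_of_le₀ (by linarith) (by positivity)
  have hnorm : ‖Uterm a w z n‖ =
      ‖w‖ ^ n / ((1 + S) * (‖w‖ ^ n + 1) * n !) * ‖∏ k ∈ Icc 1 n, (z - a k)‖ := by
    simp only [Uterm, ← hS_def, norm_mul, norm_div, norm_pow, Complex.norm_real,
      Complex.norm_natCast,      Real.norm_of_nonneg (by positivity : 0 ≤ 1 + S),
      Real.norm_of_nonneg (by positivity : 0 ≤ ‖w‖ ^ n + 1)]
  calc ‖Uterm a w z n‖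
      ≤ ‖w‖ ^ n / ((1 + S) * (‖w‖ ^ n + 1) * n !) * ((1 + S) * max 1 ‖z‖ ^ n) := by
        rw [hnorm]; gcongr; exact norm_prod_sub_le_esymmVal a z n
    _ = ‖w‖ ^ n / (‖w‖ ^ n + 1) * (max 1 ‖z‖ ^ n / n !) := by field_simp
    _ ≤ max 1 ‖z‖ ^ n / n ! := mul_le_of_le_one_left (by positivity) hw

theorem U_summable_and_bound_general (a : ℕ → ℂ) (w z : ℂ) :
    Summable (fun n : ℕ => Uterm a w z (n + 1)) ∧
      ‖U a w z‖ ≤ Real.exp (max 1 ‖z‖) := by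
  have hexp := Real.hasSum_pow_succ_div_factorial (max 1 ‖z‖)
  have hbound (n : ℕ) := norm_Uterm_le a w z (n + 1)
  refine ⟨.of_norm_bounded hexp.summable hbound, ?_⟩
  calc ‖U a w z‖ ≤ Real.exp (max 1 ‖z‖) - 1 := tsum_of_norm_bounded hexp hbound
    _ ≤ Real.exp (max 1 ‖z‖) := by linarith

/-- The series defining `𝒰` converges everywhere, and `|𝒰(w,z)| ≤ e ^ max 1 |z|`. -/
theorem U_summable_and_bound (a : ℕ → ℂ) (ha : IsAlgEnumeration a) (w z : ℂ) :
    Summable (fun n : ℕ => Uterm a w z (n + 1)) ∧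
      ‖U a w z‖ ≤ Real.exp (max 1 ‖z‖) :=
  U_summable_and_bound_general a w z
end

section
/- Let (αₙ)_{n≥1} be an enumeration of the complex numbers algebraic over ℚ, and define 𝒰(w,z) = Σ_{n=1}^∞ [wⁿ / ((1 + Σ_{k=1}^{n} |σₖ(α₁,…,αₙ)|)(|w|ⁿ + 1) · n!)] · ∏_{k=1}^{n} (z − αₖ). If T is a complex number algebraic over ℚ, then 𝒰(T,α) is algebraic over ℚ for every complex number α algebraic over ℚ; that is, the exceptional set of z ↦ 𝒰(T,z) is the whole set of algebraic numbers. -/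
open Finset

/-!
Write `α = a m`. Every term of index `n ≥ m` contains the factor `α - a m = 0`, so `𝒰(T, α)` is a
finite sum. Each of its terms is built by field operations from `T`, `α`, the algebraic `a k`
and moduli of algebraic numbers, and `|z|` is algebraic with `z` because `|z|² = z z̄`.
-/

lemma ofReal_norm_mem_algebraicClosure {z : ℂ} (hz : z ∈ algebraicClosure ℚ ℂ) :
    ((‖z‖ : ℝ) : ℂ) ∈ algebraicClosure ℚ ℂ := by
  have hconj : starRingEnd ℂ z ∈ algebraicClosure ℚ ℂ :=
    (map_mem_algebraicClosure_iff (Complex.conjAe.restrictScalars ℚ).toAlgHom).2 hz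
  have hsq : ((‖z‖ : ℝ) : ℂ) ^ 2 ∈ algebraicClosure ℚ ℂ := by
    rw [← Complex.mul_conj']
    exact mul_mem hz hconj
  exact mem_algebraicClosure_iff.2 <| IsAlgebraic.of_pow two_pos <| mem_algebraicClosure_iff.1 hsq

section

variable {a : ℕ → ℂ} {n : ℕ}

lemma esymmVal_mem_algebraicClosure (ha : ∀ i ∈ Icc 1 n, a i ∈ algebraicClosure ℚ ℂ) (k : ℕ) :
    esymmVal a n k ∈ algebraicClosure ℚ ℂ :=
  sum_mem fun _ hs => prod_mem fun i hi => ha i ((mem_powersetCard.1 hs).1 hi)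

lemma Uterm_mem_algebraicClosure {w z : ℂ} (hw : w ∈ algebraicClosure ℚ ℂ)
    (hz : z ∈ algebraicClosure ℚ ℂ) (ha : ∀ i ∈ Icc 1 n, a i ∈ algebraicClosure ℚ ℂ) :
    Uterm a w z n ∈ algebraicClosure ℚ ℂ := by
  have hweight : ((1 + ∑ k ∈ Icc 1 n, ‖esymmVal a n k‖ : ℝ) : ℂ) ∈ algebraicClosure ℚ ℂ := by
    push_cast
    exact add_mem (one_mem _) <| sum_mem fun k _ =>
      ofReal_norm_mem_algebraicClosure (esymmVal_mem_algebraicClosure ha k)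
  have hscale : ((‖w‖ ^ n + 1 : ℝ) : ℂ) ∈ algebraicClosure ℚ ℂ := by
    push_cast
    exact add_mem (pow_mem (ofReal_norm_mem_algebraicClosure hw) n) (one_mem _)
  exact mul_mem (div_mem (pow_mem hw n) (mul_mem (mul_mem hweight hscale) (natCast_mem _ _)))
    (prod_mem fun k hk => sub_mem hz (ha k hk))

lemma Uterm_eq_zero {w z : ℂ} {m : ℕ} (hm : m ∈ Icc 1 n) (hz : a m = z) : Uterm a w z n = 0 := by
  rw [Uterm, prod_eq_zero hm (sub_eq_zero.2 hz.symm), mul_zero]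

lemma U_eq_sum_range {w z : ℂ} {m : ℕ} (hm : 1 ≤ m) (hz : a m = z) :
    U a w z = ∑ n ∈ range m, Uterm a w z (n + 1) :=
  tsum_eq_sum fun n hn => Uterm_eq_zero (mem_Icc.2 ⟨hm, by simp only [mem_range] at hn; omega⟩) hz

end

/-- If `T` is algebraic over ℚ, then `𝒰(T, α)` is algebraic for every algebraic `α`:
the exceptional set of `z ↦ 𝒰(T, z)` is the whole set of algebraic numbers. -/
theorem U_isAlgebraic_of_isAlgebraic (a : ℕ → ℂ) (ha : IsAlgEnumeration a)
    (T : ℂ) (hT : IsAlgebraic ℚ T) (α : ℂ) (hα : IsAlgebraic ℚ α) :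
    IsAlgebraic ℚ (U a T α) := by
  obtain ⟨m, hm, hmα⟩ := ha.surjOn hα
  have hterm : ∀ i, 1 ≤ i → a i ∈ algebraicClosure ℚ ℂ := fun i hi =>
    mem_algebraicClosure_iff.2 (ha.mapsTo hi)
  rw [← mem_algebraicClosure_iff, U_eq_sum_range hm hmα]
  exact sum_mem fun n _ => Uterm_mem_algebraicClosure (mem_algebraicClosure_iff.2 hT)
    (mem_algebraicClosure_iff.2 hα) fun i hi => hterm i (mem_Icc.1 hi).1
end
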